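/- arXiv:2301.00205 — 3 statements merged into one kernel-verified Lean document; each statement's English description precedes it below -/
import Mathlib

section
/- Let T > 0 and f : [0,T) → [0,∞) be continuous, and suppose there exist continuous, non-negative, non-decreasing functions λ, g : [0,T) → [0,∞) such that f(t) ≤ g(t) + (λ(t)³/2) ∫₀ᵗ (t−s)² f(s) ds for all t ∈ [0,T). Then for all t ∈ [0,T), f(t) ≤ g(t) (1 + (λ(t)t)³/6) e^{λ(t)t}. -/
open Set intervalIntegral

lemma exp_kernel_integral (L t : ℝ) :
    ∫ s in (0:ℝ)..t, L^3 * ((t-s)^2 * Real.exp (L*s))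
      = 2*Real.exp (L*t) - (2 + 2*(L*t) + (L*t)^2) := by
  have h : ∀ s ∈ Set.uIcc (0:ℝ) t, HasDerivAt
      (fun s => Real.exp (L*s) * (2 + 2*L*(t-s) + L^2*(t-s)^2))
      (L^3 * ((t-s)^2 * Real.exp (L*s))) s := by
    intro s _
    have h1 : HasDerivAt (fun s => Real.exp (L*s)) (Real.exp (L*s) * L) s := by
      simpa using ((hasDerivAt_id s).const_mul L).exp
    have ha : HasDerivAt (fun s : ℝ => t - s) (-1) s := by
      simpa using (hasDerivAt_id s).const_sub t
    have h2 : HasDerivAt (fun s : ℝ => 2 + 2*L*(t-s) + L^2*(t-s)^2)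
        ((2*L)*(-1) + (L^2) * (2*(t-s)^1*(-1))) s := by
      exact ((ha.const_mul (2*L)).const_add 2).add ((ha.pow 2).const_mul (L^2))
    have := h1.fun_mul h2
    exact this.congr_deriv (by ring)
  have hc : ContinuousOn (fun s => L^3 * ((t-s)^2 * Real.exp (L*s))) (Set.uIcc 0 t) := by
    fun_prop
  rw [intervalIntegral.integral_eq_sub_of_hasDerivAt h hc.intervalIntegrable]
  simp
  ring

set_option maxHeartbeats 1000000 in
/-- Weighted (third-order kernel) Gronwall inequality. -/
theorem weighted_gronwall (T : ℝ) (hT : 0 < T) (f g lam : ℝ → ℝ)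
    (hf : ContinuousOn f (Ico 0 T)) (hf0 : ∀ t ∈ Ico (0:ℝ) T, 0 ≤ f t)
    (hg : ContinuousOn g (Ico 0 T)) (hg0 : ∀ t ∈ Ico (0:ℝ) T, 0 ≤ g t)
    (hgmono : MonotoneOn g (Ico 0 T))
    (hl : ContinuousOn lam (Ico 0 T)) (hl0 : ∀ t ∈ Ico (0:ℝ) T, 0 ≤ lam t)
    (hlmono : MonotoneOn lam (Ico 0 T))
    (hineq : ∀ t ∈ Ico (0:ℝ) T,
      f t ≤ g t + (lam t) ^ 3 / 2 * ∫ s in (0:ℝ)..t, (t - s) ^ 2 * f s) :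
    ∀ t ∈ Ico (0:ℝ) T,
      f t ≤ g t * (1 + (lam t * t) ^ 3 / 6) * Real.exp (lam t * t) := by
  intro t₀ ht₀
  obtain ⟨ht₀0, ht₀T⟩ := ht₀
  set L := lam t₀ with hLdef
  have hL0 : 0 ≤ L := hl0 t₀ ⟨ht₀0, ht₀T⟩
  have hG0 : 0 ≤ g t₀ := hg0 t₀ ⟨ht₀0, ht₀T⟩
  have hsub : Icc 0 t₀ ⊆ Ico 0 T := fun s hs => ⟨hs.1, lt_of_le_of_lt hs.2 ht₀T⟩
  have hLt₀ : 0 ≤ L*t₀ := mul_nonneg hL0 ht₀0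
  have hstuffpos : 0 < (1 + (L*t₀)^3/6) * Real.exp (L*t₀) := by positivity
  have key : ∀ ε > (0:ℝ), f t₀ ≤ (g t₀ + ε) * ((1 + (L*t₀)^3/6) * Real.exp (L*t₀)) := by
    intro ε hε
    set u : ℝ → ℝ := fun s => (g t₀ + ε) * ((1 + (L*s)^3/6) * Real.exp (L*s)) with hu
    have hucont : Continuous u := by fun_prop
    have main : ∀ s ∈ Icc 0 t₀, f s < u s := by
      by_contra hcon
      push_neg at hcon
      set B := {s ∈ Icc (0:ℝ) t₀ | u s ≤ f s} with hB
      have hBne : B.Nonempty := by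
        obtain ⟨s, hs, hle⟩ := hcon; exact ⟨s, hs, hle⟩
      have hfc : ContinuousOn f (Icc 0 t₀) := hf.mono hsub
      have hBclosed : IsClosed B := by
        have hc : ContinuousOn (fun s => f s - u s) (Icc 0 t₀) :=
          hfc.sub hucont.continuousOn
        have hBeq : B = Icc (0:ℝ) t₀ ∩ (fun s => f s - u s) ⁻¹' (Ici 0) := by
          ext s
          simp [hB, Set.mem_setOf_eq, sub_nonneg, and_comm]
        rw [hBeq]
        exact hc.preimage_isClosed_of_isClosed isClosed_Icc isClosed_Ici
      have hBbdd : BddBelow B := ⟨0, fun s hs => hs.1.1⟩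
      set τ := sInf B with hτdef
      have hτB : τ ∈ B := hBclosed.csInf_mem hBne hBbdd
      have hτIcc : τ ∈ Icc (0:ℝ) t₀ := hτB.1
      have hτ0 : 0 ≤ τ := hτIcc.1
      have hτIco : τ ∈ Ico (0:ℝ) T := hsub hτIcc
      have hlt : ∀ s ∈ Icc (0:ℝ) t₀, s < τ → f s < u s := by
        intro s hs hsτ
        by_contra hle
        push_neg at hle
        exact absurd (csInf_le hBbdd ⟨hs, hle⟩) (not_le.mpr hsτ)
      have hcomp1 : ∀ s ∈ Icc (0:ℝ) τ, (τ-s)^2 * f s ≤ (τ-s)^2 * u s := by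
        intro s hs
        rcases lt_or_eq_of_le hs.2 with h | h
        · exact mul_le_mul_of_nonneg_left
            (le_of_lt (hlt s ⟨hs.1, le_trans hs.2 hτIcc.2⟩ h)) (sq_nonneg _)
        · simp [h]
      set C : ℝ := (g t₀ + ε) * (1 + (L*τ)^3/6) with hCdef
      have hLτ : 0 ≤ L*τ := mul_nonneg hL0 hτ0
      have hCpos : 0 < C := by positivity
      have hcomp2 : ∀ s ∈ Icc (0:ℝ) τ, (τ-s)^2 * u s ≤ (τ-s)^2 * (C * Real.exp (L*s)) := by
        intro s hs
        apply mul_le_mul_of_nonneg_left _ (sq_nonneg _)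
        have hLs : L*s ≤ L*τ := mul_le_mul_of_nonneg_left hs.2 hL0
        have hLs0 : 0 ≤ L*s := mul_nonneg hL0 hs.1
        have hp : (L*s)^3 ≤ (L*τ)^3 := pow_le_pow_left₀ hLs0 hLs 3
        simp only [hu, hCdef]
        rw [mul_assoc]
        apply mul_le_mul_of_nonneg_left _ (by linarith)
        apply mul_le_mul_of_nonneg_right (by linarith) (Real.exp_nonneg _)
      have huIcc : Set.uIcc (0:ℝ) τ = Icc 0 τ := uIcc_of_le hτ0
      have hfcτ : ContinuousOn f (Set.uIcc (0:ℝ) τ) := by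
        rw [huIcc]; exact hfc.mono (Icc_subset_Icc_right hτIcc.2)
      have hint1 : IntervalIntegrable (fun s => (τ-s)^2 * f s) MeasureTheory.volume 0 τ := by
        apply ContinuousOn.intervalIntegrable
        exact (Continuous.continuousOn (by fun_prop)).mul hfcτ
      have hint2 : IntervalIntegrable (fun s => (τ-s)^2 * u s) MeasureTheory.volume 0 τ :=
        (Continuous.intervalIntegrable (by fun_prop) 0 τ)
      have hint3 : IntervalIntegrable (fun s => (τ-s)^2 * (C * Real.exp (L*s)))
          MeasureTheory.volume 0 τ :=
        (Continuous.intervalIntegrable (by fun_prop) 0 τ)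
      have I1 : (∫ s in (0:ℝ)..τ, (τ-s)^2 * f s) ≤ ∫ s in (0:ℝ)..τ, (τ-s)^2 * u s :=
        intervalIntegral.integral_mono_on hτ0 hint1 hint2 hcomp1
      have I2 : (∫ s in (0:ℝ)..τ, (τ-s)^2 * u s)
          ≤ ∫ s in (0:ℝ)..τ, (τ-s)^2 * (C * Real.exp (L*s)) :=
        intervalIntegral.integral_mono_on hτ0 hint2 hint3 hcomp2
      have Inn : 0 ≤ ∫ s in (0:ℝ)..τ, (τ-s)^2 * f s := by
        apply intervalIntegral.integral_nonneg hτ0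
        intro s hs
        exact mul_nonneg (sq_nonneg _) (hf0 s (hsub ⟨hs.1, le_trans hs.2 hτIcc.2⟩))
      have eA : (∫ s in (0:ℝ)..τ, (τ-s)^2 * (C * Real.exp (L*s)))
          = C * ∫ s in (0:ℝ)..τ, (τ-s)^2 * Real.exp (L*s) := by
        simp_rw [mul_left_comm]
        exact intervalIntegral.integral_const_mul _ _
      have e1 := exp_kernel_integral L τ
      have eB : (∫ s in (0:ℝ)..τ, L^3 * ((τ-s)^2 * Real.exp (L*s)))
          = L^3 * ∫ s in (0:ℝ)..τ, (τ-s)^2 * Real.exp (L*s) :=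
        intervalIntegral.integral_const_mul _ _
      rw [eB] at e1
      have hval : L^3/2 * ∫ s in (0:ℝ)..τ, (τ-s)^2 * (C * Real.exp (L*s))
          = C * (Real.exp (L*τ) - 1 - (L*τ) - (L*τ)^2/2) := by
        rw [eA]
        linear_combination (C/2) * e1
      -- combine
      have h1 := hineq τ hτIco
      have hgτ : g τ ≤ g t₀ := hgmono hτIco ⟨ht₀0, ht₀T⟩ hτIcc.2
      have hlτ : lam τ ≤ L := hlmono hτIco ⟨ht₀0, ht₀T⟩ hτIcc.2
      have hlτ0 : 0 ≤ lam τ := hl0 τ hτIco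
      have hlam3 : lam τ^3 ≤ L^3 := pow_le_pow_left₀ hlτ0 hlτ 3
      have chain : lam τ^3/2 * (∫ s in (0:ℝ)..τ, (τ-s)^2 * f s)
          ≤ L^3/2 * ∫ s in (0:ℝ)..τ, (τ-s)^2 * (C * Real.exp (L*s)) := by
        calc lam τ^3/2 * (∫ s in (0:ℝ)..τ, (τ-s)^2 * f s)
            ≤ L^3/2 * (∫ s in (0:ℝ)..τ, (τ-s)^2 * f s) :=
              mul_le_mul_of_nonneg_right (by linarith) Inn
          _ ≤ L^3/2 * ∫ s in (0:ℝ)..τ, (τ-s)^2 * (C * Real.exp (L*s)) :=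
              mul_le_mul_of_nonneg_left (I1.trans I2) (by positivity)
      have hfτ : f τ ≤ g t₀ + C * (Real.exp (L*τ) - 1 - (L*τ) - (L*τ)^2/2) := by
        rw [← hval]
        calc f τ ≤ g τ + lam τ^3/2 * ∫ s in (0:ℝ)..τ, (τ-s)^2 * f s := h1
          _ ≤ g t₀ + L^3/2 * ∫ s in (0:ℝ)..τ, (τ-s)^2 * (C * Real.exp (L*s)) := by
              linarith
      have huτ : u τ = C * Real.exp (L*τ) := by
        simp only [hu, hCdef]; ring
      have hub : u τ ≤ f τ := hτB.2
      have hy3 : 0 ≤ (L*τ)^3 := pow_nonneg hLτ 3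
      have hCge : g t₀ + ε ≤ C := by rw [hCdef]; nlinarith
      have hCy : 0 ≤ C * (L*τ) := mul_nonneg hCpos.le hLτ
      have hCy2 : 0 ≤ C * (L*τ)^2 := mul_nonneg hCpos.le (sq_nonneg _)
      have hdist : C * (Real.exp (L*τ) - 1 - L*τ - (L*τ)^2/2)
          = C * Real.exp (L*τ) - C - C*(L*τ) - C*(L*τ)^2/2 := by ring
      linarith [hub, hfτ, huτ, hdist, hCge, hCy, hCy2, hε]
    have := main t₀ ⟨ht₀0, le_refl t₀⟩
    simp only [hu] at this
    exact this.le
  by_contra hcgoal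
  push_neg at hcgoal
  set S := (1 + (L*t₀)^3/6) * Real.exp (L*t₀) with hS
  set δ := f t₀ - g t₀ * (1 + (L*t₀)^3/6) * Real.exp (L*t₀) with hδ
  have hδpos : 0 < δ := by simp only [hδ]; linarith
  have h := key (δ / (2*S)) (by positivity)
  have : (g t₀ + δ/(2*S)) * S = g t₀ * (1 + (L*t₀)^3/6) * Real.exp (L*t₀) + δ/2 := by
    field_simp
    ring
  rw [this] at h
  simp only [hδ] at h
  linarith
end

section
/- Let λ ≥ 0 be a constant and ω ∈ C³([0,T)) with ω, ω', ω'' ≥ 0 and ω(0) = ω'(0) = ω''(0) = 0. If ω'''(t) ≤ G(t) + λ³ ω(t) for all t ∈ [0,T), where G : [0,T) → [0,∞) is continuous, then for all t ∈ [0,T), ω(t) ≤ e^{λ t} ∫₀ᵗ G(z) (t−z)²/2 dz. -/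
open Set intervalIntegral Topology

private lemma aux_nonneg {a b : ℝ} (f f' : ℝ → ℝ) (hab : a ≤ b)
    (hc : ContinuousOn f (Icc a b))
    (hd : ∀ x ∈ Ioo a b, HasDerivAt f (f' x) x)
    (h0 : ∀ x ∈ Ioo a b, 0 ≤ f' x) (hfa : 0 ≤ f a) :
    ∀ x ∈ Icc a b, 0 ≤ f x := by
  intro x hx
  have hm : MonotoneOn f (Icc a b) := by
    apply monotoneOn_of_hasDerivWithinAt_nonneg (convex_Icc a b) hc
    · intro y hy
      rw [interior_Icc] at hy ⊢
      exact (hd y hy).hasDerivWithinAt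
    · intro y hy
      rw [interior_Icc] at hy
      exact h0 y hy
  exact hfa.trans (hm (left_mem_Icc.2 hab) hx hx.1)

/-- Key differential-inequality step of the weighted Gronwall lemma. -/
theorem third_order_differential_inequality (T lam : ℝ) (hT : 0 < T) (hlam : 0 ≤ lam)
    (ω ω1 ω2 ω3 G : ℝ → ℝ)
    (hG : ContinuousOn G (Ico 0 T)) (hG0 : ∀ t ∈ Ico (0:ℝ) T, 0 ≤ G t)
    (hω0 : ∀ t ∈ Ico (0:ℝ) T, 0 ≤ ω t)
    (hω10 : ∀ t ∈ Ico (0:ℝ) T, 0 ≤ ω1 t)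
    (hω20 : ∀ t ∈ Ico (0:ℝ) T, 0 ≤ ω2 t)
    (hinit0 : ω 0 = 0) (hinit1 : ω1 0 = 0) (hinit2 : ω2 0 = 0)
    (hω3c : ContinuousOn ω3 (Ico 0 T))
    (hd1 : ∀ t ∈ Ico (0:ℝ) T, HasDerivWithinAt ω (ω1 t) (Ico 0 T) t)
    (hd2 : ∀ t ∈ Ico (0:ℝ) T, HasDerivWithinAt ω1 (ω2 t) (Ico 0 T) t)
    (hd3 : ∀ t ∈ Ico (0:ℝ) T, HasDerivWithinAt ω2 (ω3 t) (Ico 0 T) t)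
    (hineq : ∀ t ∈ Ico (0:ℝ) T, ω3 t ≤ G t + lam ^ 3 * ω t) :
    ∀ t ∈ Ico (0:ℝ) T,
      ω t ≤ Real.exp (lam * t) * ∫ z in (0:ℝ)..t, G z * (t - z) ^ 2 / 2 := by
  intro t₀ ht₀
  obtain ⟨ht₀0, ht₀T⟩ := ht₀
  rcases eq_or_lt_of_le ht₀0 with h0 | h0
  · simp [← h0, hinit0]
  -- basic set inclusions
  have hsub : Icc (0:ℝ) t₀ ⊆ Ico 0 T := fun x hx => ⟨hx.1, lt_of_le_of_lt hx.2 ht₀T⟩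
  have hIoosub : Ioo (0:ℝ) t₀ ⊆ Ico 0 T := fun x hx => ⟨hx.1.le, hx.2.trans ht₀T⟩
  have hIooIcc : Ioo (0:ℝ) t₀ ⊆ Icc 0 t₀ := Ioo_subset_Icc_self
  have hmem : ∀ x ∈ Ioo (0:ℝ) t₀, Ico (0:ℝ) T ∈ 𝓝 x := by
    intro x hx
    have : Ioo (0:ℝ) T ∈ 𝓝 x := isOpen_Ioo.mem_nhds ⟨hx.1, hx.2.trans ht₀T⟩
    exact Filter.mem_of_superset this Ioo_subset_Ico_self
  -- derivatives at interior points
  have hdω : ∀ x ∈ Ioo (0:ℝ) t₀, HasDerivAt ω (ω1 x) x :=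
    fun x hx => (hd1 x (hIoosub hx)).hasDerivAt (hmem x hx)
  have hdω1 : ∀ x ∈ Ioo (0:ℝ) t₀, HasDerivAt ω1 (ω2 x) x :=
    fun x hx => (hd2 x (hIoosub hx)).hasDerivAt (hmem x hx)
  have hdω2 : ∀ x ∈ Ioo (0:ℝ) t₀, HasDerivAt ω2 (ω3 x) x :=
    fun x hx => (hd3 x (hIoosub hx)).hasDerivAt (hmem x hx)
  -- continuity of ω, ω1, ω2 on Icc 0 t₀
  have hcω' : ContinuousOn ω (Ico 0 T) := fun x hx => (hd1 x hx).continuousWithinAt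
  have hcω : ContinuousOn ω (Icc 0 t₀) := hcω'.mono hsub
  have hcω1' : ContinuousOn ω1 (Ico 0 T) := fun x hx => (hd2 x hx).continuousWithinAt
  have hcω1 : ContinuousOn ω1 (Icc 0 t₀) := hcω1'.mono hsub
  have hcω2' : ContinuousOn ω2 (Ico 0 T) := fun x hx => (hd3 x hx).continuousWithinAt
  have hcω2 : ContinuousOn ω2 (Icc 0 t₀) := hcω2'.mono hsub
  -- generic facts about primitives
  have hint : ∀ (g : ℝ → ℝ), ContinuousOn g (Ico 0 T) →
      ∀ x ∈ Icc (0:ℝ) t₀, IntervalIntegrable g MeasureTheory.volume 0 x := by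
    intro g hg x hx
    apply ContinuousOn.intervalIntegrable
    rw [uIcc_of_le hx.1]
    exact hg.mono ((Icc_subset_Icc_right hx.2).trans hsub)
  have hprim_cont : ∀ (g : ℝ → ℝ), ContinuousOn g (Ico 0 T) →
      ContinuousOn (fun t => ∫ z in (0:ℝ)..t, g z) (Icc 0 t₀) := by
    intro g hg
    have h := intervalIntegral.continuousOn_primitive_interval'
      (hint g hg t₀ (right_mem_Icc.2 ht₀0)) (left_mem_uIcc)
    rwa [uIcc_of_le ht₀0] at h
  have hprim_deriv : ∀ (g : ℝ → ℝ), ContinuousOn g (Ico 0 T) →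
      ∀ x ∈ Ioo (0:ℝ) t₀, HasDerivAt (fun t => ∫ z in (0:ℝ)..t, g z) (g x) x := by
    intro g hg x hx
    have hxI : x ∈ Ioo (0:ℝ) T := ⟨hx.1, hx.2.trans ht₀T⟩
    refine intervalIntegral.integral_hasDerivAt_right (hint g hg x ⟨hx.1.le, hx.2.le⟩) ?_ ?_
    · exact ContinuousOn.stronglyMeasurableAtFilter isOpen_Ioo
        (hg.mono Ioo_subset_Ico_self) x hxI
    · exact (hg.mono Ioo_subset_Ico_self).continuousAt (isOpen_Ioo.mem_nhds hxI)
  -- the three auxiliary integrands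
  have hzG : ContinuousOn (fun z => z * G z) (Ico 0 T) := continuousOn_id.mul hG
  have hz2G : ContinuousOn (fun z => z ^ 2 * G z) (Ico 0 T) :=
    ((continuous_pow 2).continuousOn).mul hG
  set H1 : ℝ → ℝ := fun t => ∫ z in (0:ℝ)..t, G z with hH1def
  set I1 : ℝ → ℝ := fun t => ∫ z in (0:ℝ)..t, z * G z with hI1def
  set I2 : ℝ → ℝ := fun t => ∫ z in (0:ℝ)..t, z ^ 2 * G z with hI2def
  have hH1c : ContinuousOn H1 (Icc 0 t₀) := hprim_cont G hG
  have hI1c : ContinuousOn I1 (Icc 0 t₀) := hprim_cont _ hzG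
  have hI2c : ContinuousOn I2 (Icc 0 t₀) := hprim_cont _ hz2G
  have hH1d : ∀ x ∈ Ioo (0:ℝ) t₀, HasDerivAt H1 (G x) x := hprim_deriv G hG
  have hI1d : ∀ x ∈ Ioo (0:ℝ) t₀, HasDerivAt I1 (x * G x) x := hprim_deriv _ hzG
  have hI2d : ∀ x ∈ Ioo (0:ℝ) t₀, HasDerivAt I2 (x ^ 2 * G x) x := hprim_deriv _ hz2G
  have hH1nn : ∀ x ∈ Icc (0:ℝ) t₀, 0 ≤ H1 x := by
    intro x hx
    apply intervalIntegral.integral_nonneg hx.1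
    intro z hz
    exact hG0 z (hsub ⟨hz.1, hz.2.trans hx.2⟩)
  -- exponential derivative helper
  have hexp : ∀ (c x : ℝ), HasDerivAt (fun t => Real.exp (c * t)) (c * Real.exp (c * x)) x := by
    intro c x
    have h := (Real.hasDerivAt_exp (c * x)).comp x ((hasDerivAt_id x).const_mul c)
    simpa [Function.comp_def, mul_comm] using h
  -- Step 1 : ω2 ≤ exp(λ t) * H1
  set v : ℝ → ℝ := fun t => ω2 t + lam * ω1 t + lam ^ 2 * ω t with hvdef
  have hvd : ∀ x ∈ Ioo (0:ℝ) t₀,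
      HasDerivAt v (ω3 x + lam * ω2 x + lam ^ 2 * ω1 x) x := fun x hx =>
    ((hdω2 x hx).add ((hdω1 x hx).const_mul lam)).add ((hdω x hx).const_mul (lam ^ 2))
  have hvc : ContinuousOn v (Icc 0 t₀) :=
    (hcω2.add (continuousOn_const.mul hcω1)).add (continuousOn_const.mul hcω)
  have hφ : ∀ x ∈ Icc (0:ℝ) t₀, 0 ≤ H1 x - Real.exp (-lam * x) * v x := by
    apply aux_nonneg _ (fun x => G x - ((-lam * Real.exp (-lam * x)) * v x +
      Real.exp (-lam * x) * (ω3 x + lam * ω2 x + lam ^ 2 * ω1 x))) ht₀0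
    · exact hH1c.sub (((Real.continuous_exp.comp (continuous_const.mul continuous_id)).continuousOn).mul hvc)
    · intro x hx
      exact (hH1d x hx).sub ((hexp (-lam) x).mul (hvd x hx))
    · intro x hx
      have hxS := hIoosub hx
      have hGx : 0 ≤ G x := hG0 x hxS
      have hkey : ω3 x + lam * ω2 x + lam ^ 2 * ω1 x ≤ G x + lam * v x := by
        have := hineq x hxS
        simp only [hvdef]
        nlinarith [this]
      have hE1 : Real.exp (-lam * x) ≤ 1 := by
        have : Real.exp (-lam * x) ≤ Real.exp 0 :=
          Real.exp_le_exp.2 (by nlinarith [hx.1.le])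
        simpa using this
      have hEpos := (Real.exp_pos (-lam * x)).le
      have h1 : Real.exp (-lam * x) * (ω3 x + lam * ω2 x + lam ^ 2 * ω1 x) ≤
          Real.exp (-lam * x) * (G x + lam * v x) :=
        mul_le_mul_of_nonneg_left hkey hEpos
      have h2 : Real.exp (-lam * x) * G x ≤ G x := by nlinarith
      nlinarith [h1, h2]
    · simp [hinit0, hinit1, hinit2, hvdef, hH1def, intervalIntegral.integral_same]
  have hstep1 : ∀ x ∈ Icc (0:ℝ) t₀, ω2 x ≤ Real.exp (lam * x) * H1 x := by
    intro x hx
    have h := hφ x hx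
    have hv2 : ω2 x ≤ v x := by
      simp only [hvdef]
      nlinarith [mul_nonneg hlam (hω10 x (hsub hx)),
        mul_nonneg (pow_nonneg hlam 2) (hω0 x (hsub hx))]
    have hEv : Real.exp (-lam * x) * v x ≤ H1 x := by linarith
    calc ω2 x ≤ v x := hv2
      _ = Real.exp (lam * x) * (Real.exp (-lam * x) * v x) := by
          rw [← mul_assoc, ← Real.exp_add]; simp
      _ ≤ Real.exp (lam * x) * H1 x :=
          mul_le_mul_of_nonneg_left hEv (Real.exp_pos _).le
  -- K1
  set K1 : ℝ → ℝ := fun t => t * H1 t - I1 t with hK1def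
  have hK1d : ∀ x ∈ Ioo (0:ℝ) t₀, HasDerivAt K1 (H1 x) x := by
    intro x hx
    have h := ((hasDerivAt_id' (x := x)).mul (hH1d x hx)).sub (hI1d x hx)
    exact h.congr_deriv (by ring)
  have hK1c : ContinuousOn K1 (Icc 0 t₀) := (continuousOn_id.mul hH1c).sub hI1c
  have hK1nn : ∀ x ∈ Icc (0:ℝ) t₀, 0 ≤ K1 x := by
    apply aux_nonneg _ H1 ht₀0 hK1c hK1d (fun x hx => hH1nn x (hIooIcc hx))
    simp [hK1def, hH1def, hI1def, intervalIntegral.integral_same]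
  -- Step 2 : ω1 ≤ exp(λ t) * K1
  have hψ1 : ∀ x ∈ Icc (0:ℝ) t₀, 0 ≤ Real.exp (lam * x) * K1 x - ω1 x := by
    apply aux_nonneg _ (fun x => ((lam * Real.exp (lam * x)) * K1 x +
      Real.exp (lam * x) * H1 x) - ω2 x) ht₀0
    · exact (((Real.continuous_exp.comp (continuous_const.mul continuous_id)).continuousOn).mul hK1c).sub hcω1
    · intro x hx
      exact ((hexp lam x).mul (hK1d x hx)).sub (hdω1 x hx)
    · intro x hx
      have h1 := hstep1 x (hIooIcc hx)
      have h2 : 0 ≤ (lam * Real.exp (lam * x)) * K1 x :=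
        mul_nonneg (mul_nonneg hlam (Real.exp_pos _).le) (hK1nn x (hIooIcc hx))
      linarith
    · simp [hinit1, hK1def, hH1def, hI1def, intervalIntegral.integral_same]
  have hstep2 : ∀ x ∈ Icc (0:ℝ) t₀, ω1 x ≤ Real.exp (lam * x) * K1 x := by
    intro x hx; linarith [hψ1 x hx]
  -- K2
  set K2 : ℝ → ℝ := fun t => t ^ 2 / 2 * H1 t - t * I1 t + I2 t / 2 with hK2def
  have hsq : ∀ x : ℝ, HasDerivAt (fun t : ℝ => t ^ 2 / 2) x x := by
    intro x
    have h := (hasDerivAt_pow 2 x).div_const 2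
    exact h.congr_deriv (by push_cast; ring)
  have hK2d : ∀ x ∈ Ioo (0:ℝ) t₀, HasDerivAt K2 (K1 x) x := by
    intro x hx
    have h := (((hsq x).mul (hH1d x hx)).sub
      ((hasDerivAt_id' (x := x)).mul (hI1d x hx))).add ((hI2d x hx).div_const 2)
    exact h.congr_deriv (by simp only [hK1def]; ring)
  have hK2c : ContinuousOn K2 (Icc 0 t₀) :=
    (((continuous_pow 2).continuousOn.div_const 2).mul hH1c).sub
      (continuousOn_id.mul hI1c) |>.add (hI2c.div_const 2)
  have hK2nn : ∀ x ∈ Icc (0:ℝ) t₀, 0 ≤ K2 x := by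
    apply aux_nonneg _ K1 ht₀0 hK2c hK2d (fun x hx => hK1nn x (hIooIcc hx))
    simp [hK2def, hH1def, hI1def, hI2def, intervalIntegral.integral_same]
  -- Step 3 : ω ≤ exp(λ t) * K2
  have hψ2 : ∀ x ∈ Icc (0:ℝ) t₀, 0 ≤ Real.exp (lam * x) * K2 x - ω x := by
    apply aux_nonneg _ (fun x => ((lam * Real.exp (lam * x)) * K2 x +
      Real.exp (lam * x) * K1 x) - ω1 x) ht₀0
    · exact (((Real.continuous_exp.comp (continuous_const.mul continuous_id)).continuousOn).mul hK2c).sub hcω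
    · intro x hx
      exact ((hexp lam x).mul (hK2d x hx)).sub (hdω x hx)
    · intro x hx
      have h1 := hstep2 x (hIooIcc hx)
      have h2 : 0 ≤ (lam * Real.exp (lam * x)) * K2 x :=
        mul_nonneg (mul_nonneg hlam (Real.exp_pos _).le) (hK2nn x (hIooIcc hx))
      linarith
    · simp [hinit0, hK2def, hH1def, hI1def, hI2def, intervalIntegral.integral_same]
  have hfinal : ω t₀ ≤ Real.exp (lam * t₀) * K2 t₀ := by
    have := hψ2 t₀ (right_mem_Icc.2 ht₀0)
    linarith
  -- identify K2 t₀ with the weighted integral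
  have hkey : (∫ z in (0:ℝ)..t₀, G z * (t₀ - z) ^ 2 / 2) = K2 t₀ := by
    have hptw : ∀ z : ℝ, G z * (t₀ - z) ^ 2 / 2 =
        (t₀ ^ 2 / 2 * G z - t₀ * (z * G z)) + z ^ 2 * G z / 2 := fun z => by ring
    have hmem₀ : t₀ ∈ Icc (0:ℝ) t₀ := right_mem_Icc.2 ht₀0
    have i1 : IntervalIntegrable (fun z => t₀ ^ 2 / 2 * G z) MeasureTheory.volume 0 t₀ :=
      (hint G hG t₀ hmem₀).const_mul _
    have i2 : IntervalIntegrable (fun z => t₀ * (z * G z)) MeasureTheory.volume 0 t₀ :=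
      (hint _ hzG t₀ hmem₀).const_mul _
    have i3 : IntervalIntegrable (fun z => z ^ 2 * G z / 2) MeasureTheory.volume 0 t₀ :=
      (hint _ hz2G t₀ hmem₀).div_const _
    simp_rw [hptw]
    rw [intervalIntegral.integral_add (i1.sub i2) i3, intervalIntegral.integral_sub i1 i2,
      intervalIntegral.integral_const_mul, intervalIntegral.integral_const_mul,
      intervalIntegral.integral_div]
  rw [hkey]
  exact hfinal
end

section
/- Let b : [0,τ] → [0,∞) be continuous and A ≥ 0 be such that (the backward energy inequality) sup_{s∈[t,τ]} E(s)² ≤ 2 ∫ₜ^τ b(s) E(s) ds holds for all t ∈ [0,τ], where E : [0,τ] → [0,∞) is continuous with E(τ) = 0. Then sup_{s∈[0,τ]} E(s) ≤ 2 ∫₀^τ b(s) ds. -/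
open Set intervalIntegral

/-- Backward energy estimate with zero terminal data. -/
theorem backward_energy_estimate (τ : ℝ) (hτ : 0 < τ) (b E : ℝ → ℝ)
    (hb : ContinuousOn b (Icc 0 τ)) (hb0 : ∀ s ∈ Icc (0:ℝ) τ, 0 ≤ b s)
    (hE : ContinuousOn E (Icc 0 τ)) (hE0 : ∀ s ∈ Icc (0:ℝ) τ, 0 ≤ E s)
    (hEτ : E τ = 0)
    (hineq : ∀ t ∈ Icc (0:ℝ) τ,
      sSup ((fun s => (E s) ^ 2) '' Icc t τ) ≤ 2 * ∫ s in t..τ, b s * E s) :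
    sSup (E '' Icc 0 τ) ≤ 2 * ∫ s in (0:ℝ)..τ, b s := by
  have hτ' : (0:ℝ) ≤ τ := hτ.le
  have hcpt : IsCompact (Icc (0:ℝ) τ) := isCompact_Icc
  have hne : (Icc (0:ℝ) τ).Nonempty := nonempty_Icc.mpr hτ'
  obtain ⟨s₀, hs₀, hmax⟩ := hcpt.exists_isMaxOn hne hE
  set M := E s₀ with hM
  have hMnn : 0 ≤ M := hE0 s₀ hs₀
  have hEle : ∀ s ∈ Icc (0:ℝ) τ, E s ≤ M := fun s hs => hmax hs
  have hsup : sSup (E '' Icc 0 τ) = M := by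
    apply IsGreatest.csSup_eq
    exact ⟨⟨s₀, hs₀, rfl⟩, by rintro x ⟨s, hs, rfl⟩; exact hEle s hs⟩
  rw [hsup]
  -- integral of b is nonneg
  have hbInt : IntervalIntegrable b MeasureTheory.volume 0 τ :=
    (hb.mono (by rw [uIcc_of_le hτ'])).intervalIntegrable
  have hbEInt : IntervalIntegrable (fun s => b s * E s) MeasureTheory.volume 0 τ :=
    ((hb.mul hE).mono (by rw [uIcc_of_le hτ'])).intervalIntegrable
  have hbMInt : IntervalIntegrable (fun s => b s * M) MeasureTheory.volume 0 τ :=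
    hbInt.mul_const M
  have hIb : 0 ≤ ∫ s in (0:ℝ)..τ, b s := by
    apply intervalIntegral.integral_nonneg hτ'
    intro s hs; exact hb0 s hs
  -- M^2 ≤ 2 * ∫ b E
  have hsq : M ^ 2 ≤ 2 * ∫ s in (0:ℝ)..τ, b s * E s := by
    refine le_trans ?_ (hineq 0 ⟨le_refl 0, hτ'⟩)
    apply le_csSup
    · exact (hcpt.bddAbove_image ((hE.pow 2)))
    · exact ⟨s₀, hs₀, rfl⟩
  have hintle : (∫ s in (0:ℝ)..τ, b s * E s) ≤ (∫ s in (0:ℝ)..τ, b s) * M := by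
    have : (∫ s in (0:ℝ)..τ, b s * E s) ≤ ∫ s in (0:ℝ)..τ, b s * M := by
      apply intervalIntegral.integral_mono_on hτ' hbEInt hbMInt
      intro s hs
      exact mul_le_mul_of_nonneg_left (hEle s hs) (hb0 s hs)
    simpa [intervalIntegral.integral_mul_const] using this
  have key : M ^ 2 ≤ 2 * ((∫ s in (0:ℝ)..τ, b s) * M) := by
    calc M ^ 2 ≤ 2 * ∫ s in (0:ℝ)..τ, b s * E s := hsq
      _ ≤ 2 * ((∫ s in (0:ℝ)..τ, b s) * M) := by linarith
  rcases hMnn.eq_or_lt with h0 | hMpos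
  · rw [← h0]; linarith
  · have : M * M ≤ (2 * ∫ s in (0:ℝ)..τ, b s) * M := by nlinarith [key]
    exact le_of_mul_le_mul_right this hMpos
end
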